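/- Poincaré lemma for 1-forms: every closed smooth 1-form on a star-shaped (hence simply connected) open subset U of ℝⁿ is exact, i.e. if ω = a_i dx^i is smooth on U and satisfies ∂a_j/∂x^i − ∂a_i/∂x^j = 0 for all i, j on U, then there exists a smooth function f : U → ℝ with a_i = ∂f/∂x^i on U, so that ω = df. Thus on such a domain every closed form of degree 1 is a differential. -/

import Mathlib

/-!
On a convex set, the curve integral `f b = ∫ ω` along the segment from a base point to `b` is a
primitive of any closed 1-form `ω`. A star-shaped open set `U` need not be convex, but
around each `x ∈ U` the cone `convexJoin {c} (ball x ε)` over a small ball is convex and lies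
in `U`; applying the convex case there shows that the segment integral from the centre `c` has
derivative `ω x` at `x`. Smoothness of the primitive follows from `df = ω`, and in coordinates
closedness `∂ᵢaⱼ = ∂ⱼaᵢ` is exactly the symmetry of the derivative of `ω = ∑ aᵢ dxⁱ`.
-/

open Set Metric

section StarConvex

variable {𝕜 E F : Type*} [RCLike 𝕜] [NormedAddCommGroup E] [NormedSpace 𝕜 E] [NormedSpace ℝ E]
  [NormedAddCommGroup F] [NormedSpace 𝕜 F] [NormedSpace ℝ F] [CompleteSpace F]

theorem StarConvex.exists_forall_hasFDerivAt_of_fderiv_symmetric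
    {U : Set E} {c : E} {ω : E → E →L[𝕜] F} (hU : IsOpen U) (hstar : StarConvex ℝ c U)
    (hω : DifferentiableOn ℝ ω U) (hdω : ∀ y ∈ U, ∀ u v, fderiv ℝ ω y u v = fderiv ℝ ω y v u) :
    ∃ f : E → F, ∀ x ∈ U, HasFDerivAt f (ω x) x := by
  refine ⟨fun b ↦ ∫ᶜ y in .segment c b, ω y, fun x hx ↦ ?_⟩
  obtain ⟨ε, hε, hball⟩ := isOpen_iff.mp hU x hx
  set S := convexJoin ℝ {c} (ball x ε)
  have hSU : S ⊆ U := by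
    simp only [S, convexJoin_singleton_left, iUnion_subset_iff]
    exact fun y hy ↦ hstar.segment_subset (hball hy)
  have hballS : ball x ε ⊆ S := subset_convexJoin_right (singleton_nonempty c)
  have hcS : c ∈ S := subset_convexJoin_left (nonempty_ball.2 hε) (mem_singleton c)
  refine (Convex.hasFDerivWithinAt_curveIntegral_segment_of_hasFDerivWithinAt_symmetric
    (convex_singleton c |>.convexJoin (convex_ball x ε)) (dω := fderiv ℝ ω)
    (fun y hy ↦ (hω.differentiableAt (hU.mem_nhds (hSU hy))).hasFDerivAt.hasFDerivWithinAt)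
    (fun y hy u _ v _ ↦ hdω y (hSU hy) u v) hcS (hballS (mem_ball_self hε))).hasFDerivAt ?_
  exact Filter.mem_of_superset (ball_mem_nhds x hε) hballS

end StarConvex

section Coordinates

variable {ι : Type*} [Fintype ι]

noncomputable def coordOneForm (a : ι → EuclideanSpace ℝ ι → ℝ) (x : EuclideanSpace ℝ ι) :
    EuclideanSpace ℝ ι →L[ℝ] ℝ :=
  ∑ i, a i x • EuclideanSpace.proj i

theorem coordOneForm_apply (a : ι → EuclideanSpace ℝ ι → ℝ) (x v : EuclideanSpace ℝ ι) :
    coordOneForm a x v = ∑ i, a i x * v i := by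
  simp [coordOneForm]

theorem coordOneForm_single [DecidableEq ι] (a : ι → EuclideanSpace ℝ ι → ℝ)
    (x : EuclideanSpace ℝ ι) (j : ι) :
    coordOneForm a x (EuclideanSpace.single j 1) = a j x := by
  simp [coordOneForm_apply]

theorem ContDiffOn.coordOneForm {n : WithTop ℕ∞} {U : Set (EuclideanSpace ℝ ι)}
    {a : ι → EuclideanSpace ℝ ι → ℝ} (ha : ∀ i, ContDiffOn ℝ n (a i) U) :
    ContDiffOn ℝ n (coordOneForm a) U :=
  .sum fun i _ ↦ (ha i).smul contDiffOn_const

theorem fderiv_coordOneForm_apply {a : ι → EuclideanSpace ℝ ι → ℝ} {x : EuclideanSpace ℝ ι}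
    (ha : ∀ i, DifferentiableAt ℝ (a i) x) (u v : EuclideanSpace ℝ ι) :
    fderiv ℝ (coordOneForm a) x u v = ∑ i, fderiv ℝ (a i) x u * v i := by
  have : HasFDerivAt (coordOneForm a)
      (∑ i, (fderiv ℝ (a i) x).smulRight (EuclideanSpace.proj i : EuclideanSpace ℝ ι →L[ℝ] ℝ)) x :=
    HasFDerivAt.fun_sum fun i _ ↦
      (ha i).hasFDerivAt.smul_const (EuclideanSpace.proj i : EuclideanSpace ℝ ι →L[ℝ] ℝ)
  simp [this.fderiv]

theorem apply_eq_sum_mul_apply_single [DecidableEq ι] (L : EuclideanSpace ℝ ι →L[ℝ] ℝ)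
    (v : EuclideanSpace ℝ ι) :
    L v = ∑ i, v i * L (EuclideanSpace.single i 1) := by
  conv_lhs => rw [← (EuclideanSpace.basisFun ι ℝ).sum_repr v]
  simp

theorem fderiv_coordOneForm_symm [DecidableEq ι] {a : ι → EuclideanSpace ℝ ι → ℝ}
    {x : EuclideanSpace ℝ ι} (ha : ∀ i, DifferentiableAt ℝ (a i) x)
    (hclosed : ∀ i j, fderiv ℝ (a j) x (EuclideanSpace.single i 1) =
      fderiv ℝ (a i) x (EuclideanSpace.single j 1)) (u v : EuclideanSpace ℝ ι) :
    fderiv ℝ (coordOneForm a) x u v = fderiv ℝ (coordOneForm a) x v u := by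
  simp only [fderiv_coordOneForm_apply ha, apply_eq_sum_mul_apply_single (fderiv ℝ (a _) x) u,
    apply_eq_sum_mul_apply_single (fderiv ℝ (a _) x) v, Finset.sum_mul]
  rw [Finset.sum_comm]
  refine Finset.sum_congr rfl fun i _ ↦ Finset.sum_congr rfl fun j _ ↦ ?_
  rw [hclosed]
  ring

end Coordinates

theorem poincare_lemma_one_form_general (n : ℕ) (U : Set (EuclideanSpace ℝ (Fin n))) (hU : IsOpen U)
    (c : EuclideanSpace ℝ (Fin n)) (hstar : StarConvex ℝ c U)
    (a : Fin n → EuclideanSpace ℝ (Fin n) → ℝ)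
    (ha : ∀ i, ContDiffOn ℝ (⊤ : ℕ∞) (a i) U)
    (hclosed : ∀ (i j : Fin n), ∀ x ∈ U,
      fderiv ℝ (a j) x (EuclideanSpace.single i 1) -
        fderiv ℝ (a i) x (EuclideanSpace.single j 1) = 0) :
    ∃ f : EuclideanSpace ℝ (Fin n) → ℝ, ContDiffOn ℝ (⊤ : ℕ∞) f U ∧
      ∀ (i : Fin n), ∀ x ∈ U, fderiv ℝ f x (EuclideanSpace.single i 1) = a i x := by
  have hdiff : ∀ x ∈ U, ∀ i, DifferentiableAt ℝ (a i) x := fun x hx i ↦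
    ((ha i).differentiableOn (by simp)).differentiableAt (hU.mem_nhds hx)
  have hω : ContDiffOn ℝ (⊤ : ℕ∞) (coordOneForm a) U := ContDiffOn.coordOneForm ha
  obtain ⟨f, hf⟩ := hstar.exists_forall_hasFDerivAt_of_fderiv_symmetric hU
    (hω.differentiableOn (by simp)) fun x hx ↦
      fderiv_coordOneForm_symm (hdiff x hx) fun i j ↦ sub_eq_zero.mp (hclosed i j x hx)
  refine ⟨f, ?_, fun i x hx ↦ by rw [(hf x hx).fderiv, coordOneForm_single]⟩
  rw [contDiffOn_infty_iff_fderiv_of_isOpen hU]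
  exact ⟨fun x hx ↦ (hf x hx).differentiableAt.differentiableWithinAt,
    hω.congr fun x hx ↦ (hf x hx).fderiv⟩

/-- Poincaré lemma for 1-forms: every closed smooth 1-form `ω = aᵢ dxⁱ` on a star-shaped
open subset `U` of `ℝⁿ` is exact, i.e. if `∂a_j/∂xⁱ − ∂a_i/∂xʲ = 0` on `U` for all `i, j`,
then there is a smooth function `f : U → ℝ` with `aᵢ = ∂f/∂xⁱ` on `U`, so that `ω = df`. -/
theorem poincare_lemma_one_form (n : ℕ) (U : Set (EuclideanSpace ℝ (Fin n))) (hU : IsOpen U)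
    (c : EuclideanSpace ℝ (Fin n)) (hc : c ∈ U) (hstar : StarConvex ℝ c U)
    (a : Fin n → EuclideanSpace ℝ (Fin n) → ℝ)
    (ha : ∀ i, ContDiffOn ℝ (⊤ : ℕ∞) (a i) U)
    (hclosed : ∀ (i j : Fin n), ∀ x ∈ U,
      fderiv ℝ (a j) x (EuclideanSpace.single i 1) -
        fderiv ℝ (a i) x (EuclideanSpace.single j 1) = 0) :
    ∃ f : EuclideanSpace ℝ (Fin n) → ℝ, ContDiffOn ℝ (⊤ : ℕ∞) f U ∧
      ∀ (i : Fin n), ∀ x ∈ U, fderiv ℝ f x (EuclideanSpace.single i 1) = a i x :=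
  poincare_lemma_one_form_general n U hU c hstar a ha hclosed
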